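/- If G is a 3-colourable graph containing no induced subgraph isomorphic to 2P_1+P_2 (an edge plus two isolated vertices), then ioct(G) = oct(G). -/

import Mathlib

open SimpleGraph

/-- `S` is an independent set of `G`. -/
def IsIS {V : Type*} (G : SimpleGraph V) (S : Set V) : Prop :=
  S.Pairwise fun u v => ¬ G.Adj u v

/-- `G` contains no induced subgraph isomorphic to `H`. -/
def HFree {W V : Type*} (H : SimpleGraph W) (G : SimpleGraph V) : Prop :=
  IsEmpty (H ↪g G)

/-- `G` is bipartite: the vertex set splits into two independent sets. -/
def IsBip {V : Type*} (G : SimpleGraph V) : Prop :=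
  ∃ X : Set V, IsIS G X ∧ IsIS G Xᶜ

/-- `S` is a vertex cover of `G`. -/
def IsVC {V : Type*} (G : SimpleGraph V) (S : Finset V) : Prop :=
  ∀ ⦃u v⦄, G.Adj u v → u ∈ S ∨ v ∈ S

/-- minimum size of a vertex cover. -/
noncomputable def vc {V : Type*} (G : SimpleGraph V) : ℕ :=
  sInf {n | ∃ S : Finset V, IsVC G S ∧ S.card = n}

/-- minimum size of an independent vertex cover. -/
noncomputable def ivc {V : Type*} (G : SimpleGraph V) : ℕ :=
  sInf {n | ∃ S : Finset V, IsVC G S ∧ IsIS G ↑S ∧ S.card = n}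

/-- `S` is an odd cycle transversal of `G`: removing it leaves a bipartite graph. -/
def IsOCT {V : Type*} (G : SimpleGraph V) (S : Finset V) : Prop :=
  (G.induce ((S : Set V)ᶜ)).Colorable 2

/-- minimum size of an odd cycle transversal. -/
noncomputable def oct {V : Type*} (G : SimpleGraph V) : ℕ :=
  sInf {n | ∃ S : Finset V, IsOCT G S ∧ S.card = n}

/-- minimum size of an independent odd cycle transversal. -/
noncomputable def ioct {V : Type*} (G : SimpleGraph V) : ℕ :=
  sInf {n | ∃ S : Finset V, IsOCT G S ∧ IsIS G ↑S ∧ S.card = n}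

/-- `2P_1 + P_2`: one edge plus two isolated vertices. -/
def twoP1P2 : SimpleGraph (Fin 4) :=
  SimpleGraph.fromRel fun u v => u = 0 ∧ v = 1

/- ### Auxiliary lemmas -/

lemma free_aux {V : Type*} (G : SimpleGraph V) (hfree : HFree twoP1P2 G) {p q a b : V}
    (hpq : G.Adj p q) (hap : a ≠ p) (haq : a ≠ q) (hbp : b ≠ p) (hbq : b ≠ q) (hab : a ≠ b)
    (h1 : ¬G.Adj p a) (h2 : ¬G.Adj q a) (h3 : ¬G.Adj p b) (h4 : ¬G.Adj q b)
    (h5 : ¬G.Adj a b) : False := by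
  have hpq' : p ≠ q := G.ne_of_adj hpq
  have h1' : ¬G.Adj a p := fun h => h1 h.symm
  have h2' : ¬G.Adj a q := fun h => h2 h.symm
  have h3' : ¬G.Adj b p := fun h => h3 h.symm
  have h4' : ¬G.Adj b q := fun h => h4 h.symm
  have h5' : ¬G.Adj b a := fun h => h5 h.symm
  apply hfree.false
  refine ⟨⟨![p, q, a, b], ?_⟩, ?_⟩
  · intro i j hij
    fin_cases i <;> fin_cases j <;> simp_all
  · intro i j
    change G.Adj (![p, q, a, b] _) (![p, q, a, b] _) ↔ _
    fin_cases i <;> fin_cases j <;>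
      simp [twoP1P2, SimpleGraph.fromRel_adj, hpq, hpq.symm, h1, h2, h3, h4, h5,
        h1', h2', h3', h4', h5', G.irrefl, hpq', hpq'.symm, hap, haq, hbp, hbq, hab]

lemma isOCT_of_bipartition {V : Type*} (G : SimpleGraph V) (T : Finset V) (A : Set V)
    (h1 : ∀ x y, G.Adj x y → x ∉ T → y ∉ T → x ∈ A → y ∈ A → False)
    (h2 : ∀ x y, G.Adj x y → x ∉ T → y ∉ T → x ∉ A → y ∉ A → False) : IsOCT G T := by
  classical
  refine ⟨Coloring.mk (fun t => if (t : V) ∈ A then 0 else 1) ?_⟩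
  intro s t hst
  have hs : (s : V) ∉ T := by
    have h := s.2; simp only [Set.mem_compl_iff, Finset.mem_coe] at h; exact h
  have ht : (t : V) ∉ T := by
    have h := t.2; simp only [Set.mem_compl_iff, Finset.mem_coe] at h; exact h
  have hadj : G.Adj (s : V) (t : V) := hst
  by_cases hsA : (s : V) ∈ A <;> by_cases htA : (t : V) ∈ A <;> simp [hsA, htA]
  · exact h1 _ _ hadj hs ht hsA htA
  · exact h2 _ _ hadj hs ht hsA htA

lemma fin3_cases : ∀ a i j k : Fin 3, i ≠ j → i ≠ k → j ≠ k → (a = i ∨ a = j ∨ a = k) := by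
  decide

lemma fin2_cases : ∀ a : Fin 2, a = 0 ∨ a = 1 := by decide

lemma class_isOCT {V : Type*} [Fintype V] (G : SimpleGraph V) (φ : G.Coloring (Fin 3))
    (i : Fin 3) :
    IsOCT G (Finset.univ.filter fun x => φ x = i) ∧
      IsIS G ↑(Finset.univ.filter fun x => φ x = i) := by
  classical
  obtain ⟨j, k, hij, hik, hjk⟩ : ∃ j k : Fin 3, i ≠ j ∧ i ≠ k ∧ j ≠ k := by
    revert i; decide
  constructor
  · apply isOCT_of_bipartition G _ {x | φ x = j}
    · intro x y hxy _ _ hx hy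
      exact φ.valid hxy (by simp at hx hy; rw [hx, hy])
    · intro x y hxy hx hy hx' hy'
      simp at hx hy hx' hy'
      have hxk := fin3_cases (φ x) i j k hij hik hjk
      have hyk := fin3_cases (φ y) i j k hij hik hjk
      exact φ.valid hxy (by omega)
  · intro x hx y hy hne hadj
    simp at hx hy
    exact φ.valid hadj (by rw [hx, hy])

lemma ioct_le_card {V : Type*} (G : SimpleGraph V) (T : Finset V)
    (h1 : IsOCT G T) (h2 : IsIS G ↑T) : ioct G ≤ T.card :=
  Nat.sInf_le ⟨T, h1, h2, rfl⟩

lemma oct_le_card {V : Type*} (G : SimpleGraph V) (T : Finset V)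
    (h1 : IsOCT G T) : oct G ≤ T.card :=
  Nat.sInf_le ⟨T, h1, rfl⟩

lemma isOCT_univ {V : Type*} [Fintype V] (G : SimpleGraph V) : IsOCT G (Finset.univ) := by
  refine ⟨Coloring.mk (fun t => 0) ?_⟩
  intro s t _
  exact absurd s.2 (by simp)

set_option maxHeartbeats 1600000 in
theorem stmt_19 {V : Type*} [Fintype V] (G : SimpleGraph V)
    (hcol : G.Colorable 3) (hfree : HFree twoP1P2 G) :
    ioct G = oct G := by
  classical
  obtain ⟨φ⟩ := hcol
  -- oct ≤ ioct
  have hioct_ne : {n | ∃ T : Finset V, IsOCT G T ∧ IsIS G ↑T ∧ T.card = n}.Nonempty :=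
    ⟨_, _, (class_isOCT G φ 0).1, (class_isOCT G φ 0).2, rfl⟩
  have hoi : oct G ≤ ioct G := by
    obtain ⟨T0, hT0, _, hT0card⟩ := Nat.sInf_mem hioct_ne
    have : T0.card = ioct G := hT0card
    exact this ▸ oct_le_card G T0 hT0
  refine le_antisymm ?_ hoi
  -- minimum OCT
  have hoct_ne : {n | ∃ T : Finset V, IsOCT G T ∧ T.card = n}.Nonempty :=
    ⟨_, Finset.univ, isOCT_univ G, rfl⟩
  obtain ⟨S, hS, hScard'⟩ := Nat.sInf_mem hoct_ne
  have hScard : S.card = oct G := hScard'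
  clear hScard'
  by_cases hind : IsIS G ↑S
  · exact hScard ▸ ioct_le_card G S hS hind
  -- S contains an edge u-v
  obtain ⟨u, hu, v, hv, huv, hadj⟩ :
      ∃ u, u ∈ S ∧ ∃ v, v ∈ S ∧ u ≠ v ∧ G.Adj u v := by
    unfold IsIS Set.Pairwise at hind
    push_neg at hind
    obtain ⟨u, hu, v, hv, hne, hadj⟩ := hind
    exact ⟨u, Finset.mem_coe.mp hu, v, Finset.mem_coe.mp hv, hne, hadj⟩
  obtain ⟨ψ⟩ := hS
  -- the total extension of the 2-colouring of G - S
  set h : V → Fin 2 := fun x => if hx : x ∈ ((S : Set V))ᶜ then ψ ⟨x, hx⟩ else 0 with hh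
  have hvalid : ∀ x y, x ∉ S → y ∉ S → G.Adj x y → h x ≠ h y := by
    intro x y hx hy hxy
    have hx' : x ∈ ((S : Set V))ᶜ := by simpa using hx
    have hy' : y ∈ ((S : Set V))ᶜ := by simpa using hy
    show (if hx : x ∈ ((S : Set V))ᶜ then ψ ⟨x, hx⟩ else 0) ≠
      (if hy : y ∈ ((S : Set V))ᶜ then ψ ⟨y, hy⟩ else 0)
    rw [dif_pos hx', dif_pos hy']
    exact ψ.valid hxy
  have hside : ∀ x y, x ∉ S → y ∉ S → h x = h y → ¬G.Adj x y :=
    fun x y hx hy he hxy => hvalid x y hx hy hxy he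
  -- minimality: every vertex of S has a neighbour on each side
  have hM : ∀ w ∈ S, ∀ c : Fin 2, ∃ x, x ∉ S ∧ h x = c ∧ G.Adj w x := by
    intro w hw c
    by_contra hcon
    push_neg at hcon
    have hOCT : IsOCT G (S.erase w) := by
      refine ⟨Coloring.mk (fun t => if (t : V) = w then c else h t) ?_⟩
      intro s t hst hEq
      have hs : (s : V) ∉ S.erase w := by
        have hp := s.2; simp only [Set.mem_compl_iff, Finset.mem_coe] at hp; exact hp
      have ht : (t : V) ∉ S.erase w := by
        have hp := t.2; simp only [Set.mem_compl_iff, Finset.mem_coe] at hp; exact hp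
      have hadj' : G.Adj (s : V) (t : V) := hst
      by_cases hsw : (s : V) = w <;> by_cases htw : (t : V) = w
      · exact G.irrefl (by rwa [hsw, htw] at hadj')
      · have htS : (t : V) ∉ S := fun hmem => ht (Finset.mem_erase.mpr ⟨htw, hmem⟩)
        simp only [hsw, htw, if_pos rfl, if_neg htw] at hEq
        exact hcon (t : V) htS hEq.symm (by rwa [hsw] at hadj')
      · have hsS : (s : V) ∉ S := fun hmem => hs (Finset.mem_erase.mpr ⟨hsw, hmem⟩)
        simp only [hsw, htw, if_neg hsw, if_pos rfl] at hEq
        exact hcon (s : V) hsS hEq (by rw [htw] at hadj'; exact hadj'.symm)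
      · have hsS : (s : V) ∉ S := fun hmem => hs (Finset.mem_erase.mpr ⟨hsw, hmem⟩)
        have htS : (t : V) ∉ S := fun hmem => ht (Finset.mem_erase.mpr ⟨htw, hmem⟩)
        simp only [if_neg hsw, if_neg htw] at hEq
        exact hvalid _ _ hsS htS hadj' hEq
    have hle := oct_le_card G _ hOCT
    rw [Finset.card_erase_of_mem hw] at hle
    have h1 : 1 ≤ S.card := Finset.card_pos.mpr ⟨w, hw⟩
    omega
  -- freeness: per side, the non-neighbours of any w ∈ S form a subsingleton
  have hF2 : ∀ w ∈ S, ∀ a b, a ∉ S → b ∉ S → h a = h b →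
      ¬G.Adj w a → ¬G.Adj w b → a = b := by
    intro w hw a b ha hb he hwa hwb
    by_contra hab
    obtain ⟨x, hxS, hxc, hwx⟩ := hM w hw (h a)
    have hax : a ≠ x := fun hq => hwa (hq ▸ hwx)
    have hbx : b ≠ x := fun hq => hwb (hq ▸ hwx)
    have haw : a ≠ w := fun hq => ha (hq ▸ hw)
    have hbw : b ≠ w := fun hq => hb (hq ▸ hw)
    exact free_aux G hfree hwx haw hax hbw hbx hab hwa
      (hside x a hxS ha hxc) hwb (hside x b hxS hb (hxc.trans he)) (hside a b ha hb he)
  -- the third colour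
  obtain ⟨γ, hγ1, hγ2, hγ3⟩ :
      ∃ γ : Fin 3, γ ≠ φ u ∧ γ ≠ φ v ∧ ∀ z : Fin 3, z ≠ φ u → z ≠ φ v → z = γ := by
    have huvc : φ u ≠ φ v := φ.valid hadj
    revert huvc
    generalize φ u = A; generalize φ v = B
    revert A B; decide
  -- common neighbourhood of u and v outside S
  set C : Set V := {x | x ∉ S ∧ G.Adj u x ∧ G.Adj v x} with hCdef
  have hCγ : ∀ x ∈ C, φ x = γ := by
    rintro x ⟨-, hux, hvx⟩
    exact hγ3 _ (fun hq => φ.valid hux hq.symm) (fun hq => φ.valid hvx hq.symm)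
  have hCC : ∀ x y, x ∈ C → y ∈ C → ¬G.Adj x y := by
    intro x y hx hy hxy
    exact φ.valid hxy (by rw [hCγ x hx, hCγ y hy])
  have hS2 : 2 ≤ S.card := by
    have hsub : ({u, v} : Finset V) ⊆ S := by
      intro z hz
      rcases Finset.mem_insert.mp hz with rfl | hz
      · exact hu
      · exact (Finset.mem_singleton.mp hz) ▸ hv
    calc 2 = ({u, v} : Finset V).card := (Finset.card_pair huv).symm
    _ ≤ S.card := Finset.card_le_card hsub
  set Fu : Fin 2 → Finset V :=
    fun c => Finset.univ.filter (fun x => x ∉ S ∧ h x = c ∧ ¬G.Adj u x) with hFu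
  set Fv : Fin 2 → Finset V :=
    fun c => Finset.univ.filter (fun x => x ∉ S ∧ h x = c ∧ ¬G.Adj v x) with hFv
  have hFu1 : ∀ c, (Fu c).card ≤ 1 := by
    intro c
    refine Finset.card_le_one.mpr (fun a ha b hb => ?_)
    simp only [hFu, Finset.mem_filter] at ha hb
    exact hF2 u hu a b ha.2.1 hb.2.1 (ha.2.2.1.trans hb.2.2.1.symm) ha.2.2.2 hb.2.2.2
  have hFv1 : ∀ c, (Fv c).card ≤ 1 := by
    intro c
    refine Finset.card_le_one.mpr (fun a ha b hb => ?_)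
    simp only [hFv, Finset.mem_filter] at ha hb
    exact hF2 v hv a b ha.2.1 hb.2.1 (ha.2.2.1.trans hb.2.2.1.symm) ha.2.2.2 hb.2.2.2
  by_cases hP : ∃ a b, a ∈ C ∧ b ∈ C ∧ h a = h b ∧ a ≠ b
  · -- Case P : some side contains two vertices of C
    obtain ⟨a0, b0, ha0, hb0, hs0, hne0⟩ := hP
    have hφuv : φ u ≠ φ v := φ.valid hadj
    have hSγ : ∀ s ∈ S, φ s ≠ γ := by
      intro s hs heq
      by_cases h1 : G.Adj s a0
      · exact φ.valid h1 (heq.trans (hCγ a0 ha0).symm)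
      by_cases h2 : G.Adj s b0
      · exact φ.valid h2 (heq.trans (hCγ b0 hb0).symm)
      exact hne0 (hF2 s hs a0 b0 ha0.1 hb0.1 hs0 h1 h2)
    have hdisj : Disjoint (Finset.univ.filter (fun x => φ x = φ u))
        (Finset.univ.filter (fun x => φ x = φ v)) := by
      rw [Finset.disjoint_left]
      intro x hx1 hx2
      simp only [Finset.mem_filter] at hx1 hx2
      exact hφuv (hx1.2.symm.trans hx2.2)
    have hcov : (Finset.univ.filter (fun x => φ x = φ u))
        ∪ (Finset.univ.filter (fun x => φ x = φ v)) ⊆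
        (((S ∪ Fu 0) ∪ Fu 1) ∪ Fv 0) ∪ Fv 1 := by
      intro x hx
      have hfin2 := fin2_cases (h x)
      by_cases hxS : x ∈ S
      · simp only [Finset.mem_union]; tauto
      have hxγ : φ x ≠ γ := by
        rcases Finset.mem_union.mp hx with hx | hx <;>
          simp only [Finset.mem_filter] at hx
        · rw [hx.2]; exact fun q => hγ1 q.symm
        · rw [hx.2]; exact fun q => hγ2 q.symm
      have hnC : ¬(G.Adj u x ∧ G.Adj v x) := by
        intro hq
        exact hxγ (hCγ x ⟨hxS, hq.1, hq.2⟩)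
      by_cases hux : G.Adj u x
      · have hvx : ¬G.Adj v x := fun q => hnC ⟨hux, q⟩
        simp only [Finset.mem_union, hFv, Finset.mem_filter, Finset.mem_univ, true_and]
        tauto
      · simp only [Finset.mem_union, hFu, Finset.mem_filter, Finset.mem_univ, true_and]
        tauto
    have hcardW : (Finset.univ.filter (fun x => φ x = φ u)).card
        + (Finset.univ.filter (fun x => φ x = φ v)).card ≤ S.card + 4 := by
      have h0 := Finset.card_le_card hcov
      rw [Finset.card_union_of_disjoint hdisj] at h0
      have t1 := Finset.card_union_le S (Fu 0)
      have t2 := Finset.card_union_le (S ∪ Fu 0) (Fu 1)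
      have t3 := Finset.card_union_le ((S ∪ Fu 0) ∪ Fu 1) (Fv 0)
      have t4 := Finset.card_union_le (((S ∪ Fu 0) ∪ Fu 1) ∪ Fv 0) (Fv 1)
      have := hFu1 0; have := hFu1 1; have := hFv1 0; have := hFv1 1
      omega
    by_cases hS3 : 3 ≤ S.card
    · have hor : (Finset.univ.filter (fun x => φ x = φ u)).card ≤ S.card
          ∨ (Finset.univ.filter (fun x => φ x = φ v)).card ≤ S.card := by omega
      rcases hor with hx | hx
      · exact le_trans (le_trans (ioct_le_card G _ (class_isOCT G φ (φ u)).1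
          (class_isOCT G φ (φ u)).2) hx) (le_of_eq hScard)
      · exact le_trans (le_trans (ioct_le_card G _ (class_isOCT G φ (φ v)).1
          (class_isOCT G φ (φ v)).2) hx) (le_of_eq hScard)
    -- now S = {u, v}
    have hScard2 : S.card = 2 := by omega
    have hSeq : ∀ z ∈ S, z = u ∨ z = v := by
      intro z hz
      by_contra hcon
      push_neg at hcon
      have hsub : ({z, u, v} : Finset V) ⊆ S := by
        intro t ht
        simp only [Finset.mem_insert, Finset.mem_singleton] at ht
        rcases ht with rfl | rfl | rfl
        · exact hz
        · exact hu
        · exact hv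
      have hc3 : ({z, u, v} : Finset V).card = 3 := by
        rw [Finset.card_insert_of_notMem (by simp [hcon.1, hcon.2]),
          Finset.card_pair huv]
      have := Finset.card_le_card hsub
      omega
    by_cases hW1le : (Finset.univ.filter (fun x => φ x = φ u)).card ≤ 2
    · calc ioct G ≤ (Finset.univ.filter (fun x => φ x = φ u)).card :=
        ioct_le_card G _ (class_isOCT G φ (φ u)).1 (class_isOCT G φ (φ u)).2
      _ ≤ 2 := hW1le
      _ ≤ oct G := by omega
    by_cases hW2le : (Finset.univ.filter (fun x => φ x = φ v)).card ≤ 2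
    · calc ioct G ≤ (Finset.univ.filter (fun x => φ x = φ v)).card :=
        ioct_le_card G _ (class_isOCT G φ (φ v)).1 (class_isOCT G φ (φ v)).2
      _ ≤ 2 := hW2le
      _ ≤ oct G := by omega
    push_neg at hW1le hW2le
    -- extract the two exceptional non-neighbours of a vertex of S
    have hget : ∀ w, w ∈ S → 2 < (Finset.univ.filter (fun x => φ x = φ w)).card →
        ∃ xw yw, xw ∉ S ∧ yw ∉ S ∧ h xw = 0 ∧ h yw = 1 ∧ ¬G.Adj w xw ∧ ¬G.Adj w yw ∧
          φ xw = φ w ∧ φ yw = φ w := by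
      intro w hwS hc
      have hwW : w ∈ Finset.univ.filter (fun x => φ x = φ w) := by simp
      have h2le : 1 < ((Finset.univ.filter (fun x => φ x = φ w)).erase w).card := by
        rw [Finset.card_erase_of_mem hwW]; omega
      obtain ⟨z1, hz1m, z2, hz2m, hz12⟩ := Finset.one_lt_card.mp h2le
      have hprop : ∀ z ∈ (Finset.univ.filter (fun x => φ x = φ w)).erase w,
          z ∉ S ∧ ¬G.Adj w z ∧ φ z = φ w := by
        intro z hzm
        have hzne := (Finset.mem_erase.mp hzm).1
        have hzφ : φ z = φ w := by
          have hq := (Finset.mem_erase.mp hzm).2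
          simp only [Finset.mem_filter] at hq
          exact hq.2
        have hzS : z ∉ S := by
          intro hzS
          rcases hSeq z hzS with rfl | rfl <;> rcases hSeq w hwS with rfl | rfl
          · exact hzne rfl
          · exact hφuv hzφ
          · exact hφuv hzφ.symm
          · exact hzne rfl
        exact ⟨hzS, fun hq => φ.valid hq hzφ.symm, hzφ⟩
      have hp1 := hprop z1 hz1m
      have hp2 := hprop z2 hz2m
      have hdiff : h z1 ≠ h z2 :=
        fun he => hz12 (hF2 w hwS z1 z2 hp1.1 hp2.1 he hp1.2.1 hp2.2.1)
      rcases fin2_cases (h z1) with h1c | h1c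
      · have h2c : h z2 = 1 := by
          rcases fin2_cases (h z2) with hq | hq
          · exact absurd (h1c.trans hq.symm) hdiff
          · exact hq
        exact ⟨z1, z2, hp1.1, hp2.1, h1c, h2c, hp1.2.1, hp2.2.1, hp1.2.2, hp2.2.2⟩
      · have h2c : h z2 = 0 := by
          rcases fin2_cases (h z2) with hq | hq
          · exact hq
          · exact absurd (h1c.trans hq.symm) hdiff
        exact ⟨z2, z1, hp2.1, hp1.1, h2c, h1c, hp2.2.1, hp1.2.1, hp2.2.2, hp1.2.2⟩
    obtain ⟨xu, yu, hxuS, hyuS, hxu0, hyu1, hxuA, hyuA, hxuφ, hyuφ⟩ := hget u hu hW1le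
    obtain ⟨xv, yv, hxvS, hyvS, hxv0, hyv1, hxvA, hyvA, hxvφ, hyvφ⟩ := hget v hv hW2le
    have hxvyv : ¬G.Adj xv yv := fun q => φ.valid q (hxvφ.trans hyvφ.symm)
    have htri : ∀ z, φ z = φ u ∨ φ z = φ v ∨ φ z = γ := fun z =>
      fin3_cases (φ z) (φ u) (φ v) γ hφuv (fun q => hγ1 q.symm) (fun q => hγ2 q.symm)
    have hW1cover : ∀ z, φ z = φ u → z = u ∨ z = xu ∨ z = yu := by
      intro z hz
      by_cases hzu : z = u
      · exact Or.inl hzu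
      right
      have hzS : z ∉ S := by
        intro hzS
        rcases hSeq z hzS with rfl | rfl
        · exact hzu rfl
        · exact hφuv hz.symm
      have hzadj : ¬G.Adj u z := fun q => φ.valid q hz.symm
      rcases fin2_cases (h z) with hc | hc
      · exact Or.inl (hF2 u hu z xu hzS hxuS (hc.trans hxu0.symm) hzadj hxuA)
      · exact Or.inr (hF2 u hu z yu hzS hyuS (hc.trans hyu1.symm) hzadj hyuA)
    have hW2cover : ∀ z, φ z = φ v → z = v ∨ z = xv ∨ z = yv := by
      intro z hz
      by_cases hzv : z = v
      · exact Or.inl hzv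
      right
      have hzS : z ∉ S := by
        intro hzS
        rcases hSeq z hzS with rfl | rfl
        · exact hφuv hz
        · exact hzv rfl
      have hzadj : ¬G.Adj v z := fun q => φ.valid q hz.symm
      rcases fin2_cases (h z) with hc | hc
      · exact Or.inl (hF2 v hv z xv hzS hxvS (hc.trans hxv0.symm) hzadj hxvA)
      · exact Or.inr (hF2 v hv z yv hzS hyvS (hc.trans hyv1.symm) hzadj hyvA)
    have hγcover : ∀ z, φ z = γ → z ∈ C := by
      intro z hz
      have hzS : z ∉ S := fun q => hSγ z q hz
      by_cases hux : G.Adj u z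
      · by_cases hvx : G.Adj v z
        · exact ⟨hzS, hux, hvx⟩
        · exfalso
          rcases fin2_cases (h z) with hc | hc
          · have hq : z = xv := hF2 v hv z xv hzS hxvS (hc.trans hxv0.symm) hvx hxvA
            rw [hq] at hz
            exact hγ2 (hz.symm.trans hxvφ)
          · have hq : z = yv := hF2 v hv z yv hzS hyvS (hc.trans hyv1.symm) hvx hyvA
            rw [hq] at hz
            exact hγ2 (hz.symm.trans hyvφ)
      · exfalso
        rcases fin2_cases (h z) with hc | hc
        · have hq : z = xu := hF2 u hu z xu hzS hxuS (hc.trans hxu0.symm) hux hxuA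
          rw [hq] at hz
          exact hγ1 (hz.symm.trans hxuφ)
        · have hq : z = yu := hF2 u hu z yu hzS hyuS (hc.trans hyu1.symm) hux hyuA
          rw [hq] at hz
          exact hγ1 (hz.symm.trans hyuφ)
    -- the candidate independent OCT {u, pw}
    have hcand : ∀ pw qw : V, pw ∉ S → ¬G.Adj u pw →
        (∀ cc, cc ∈ C → ¬G.Adj qw cc) →
        (∀ z, φ z = φ u → z = u ∨ z = pw ∨ z = qw) → ioct G ≤ oct G := by
      intro pw qw hpwS hpwA hqwC hcover
      have hTOCT : IsOCT G {u, pw} := by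
        apply isOCT_of_bipartition G _ {x | x = v ∨ x = xv ∨ x = yv}
        · rintro x y hxy hxT hyT (rfl | rfl | rfl) (rfl | rfl | rfl)
          all_goals first
            | exact G.irrefl hxy
            | exact hxvA hxy
            | exact hxvA hxy.symm
            | exact hyvA hxy
            | exact hyvA hxy.symm
            | exact hxvyv hxy
            | exact hxvyv hxy.symm
        · intro x y hxy hxT hyT hxA hyA
          have hmem : ∀ z, z ∉ ({u, pw} : Finset V) →
              z ∉ ({x | x = v ∨ x = xv ∨ x = yv} : Set V) → z = qw ∨ z ∈ C := by
            intro z hzT hzA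
            simp only [Set.mem_setOf_eq] at hzA
            push_neg at hzA
            have hzu : z ≠ u := fun q => hzT (by simp [q])
            have hzpw : z ≠ pw := fun q => hzT (by simp [q])
            rcases htri z with hz | hz | hz
            · rcases hcover z hz with rfl | rfl | rfl
              · exact absurd rfl hzu
              · exact absurd rfl hzpw
              · exact Or.inl rfl
            · rcases hW2cover z hz with rfl | rfl | rfl
              · exact absurd rfl hzA.1
              · exact absurd rfl hzA.2.1
              · exact absurd rfl hzA.2.2
            · exact Or.inr (hγcover z hz)
          rcases hmem x hxT hxA with rfl | hxC <;> rcases hmem y hyT hyA with rfl | hyC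
          · exact G.irrefl hxy
          · exact hqwC y hyC hxy
          · exact hqwC x hxC hxy.symm
          · exact hCC x y hxC hyC hxy
      have hupw : u ≠ pw := fun q => hpwS (q ▸ hu)
      have hTIS : IsIS G ↑({u, pw} : Finset V) := by
        intro x hx y hy hne hxy
        simp only [Finset.coe_insert, Finset.coe_singleton, Set.mem_insert_iff,
          Set.mem_singleton_iff] at hx hy
        rcases hx with rfl | rfl <;> rcases hy with rfl | rfl
        · exact hne rfl
        · exact hpwA hxy
        · exact hpwA hxy.symm
        · exact hne rfl
      calc ioct G ≤ ({u, pw} : Finset V).card := ioct_le_card G _ hTOCT hTIS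
      _ = 2 := Finset.card_pair hupw
      _ ≤ oct G := by omega
    -- if a leftover exceptional vertex has a neighbour in C, that side of C is small
    have hCsub : ∀ qw : V, qw ∉ S → ¬G.Adj u qw → (∃ cc, cc ∈ C ∧ G.Adj qw cc) →
        ∀ c1 c2, c1 ∈ C → c2 ∈ C → h c1 = h qw → h c2 = h qw → c1 = c2 := by
      rintro qw hqwS hqwA ⟨cc, hccC, hqwcc⟩ c1 c2 h1C h2C hc1 hc2
      by_contra hne
      have hccside : h cc ≠ h qw := fun he => hside qw cc hqwS hccC.1 he.symm hqwcc
      have hc1qw : c1 ≠ qw := fun q => hqwA (q ▸ h1C.2.1)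
      have hc2qw : c2 ≠ qw := fun q => hqwA (q ▸ h2C.2.1)
      have hc1cc : c1 ≠ cc := fun q => hccside (q ▸ hc1)
      have hc2cc : c2 ≠ cc := fun q => hccside (q ▸ hc2)
      exact free_aux G hfree hqwcc hc1qw hc1cc hc2qw hc2cc hne
        (hside qw c1 hqwS h1C.1 hc1.symm) (hCC cc c1 hccC h1C)
        (hside qw c2 hqwS h2C.1 hc2.symm) (hCC cc c2 hccC h2C) (hCC c1 c2 h1C h2C)
    by_cases hyuC : ∃ cc, cc ∈ C ∧ G.Adj yu cc
    · by_cases hxuC : ∃ cc, cc ∈ C ∧ G.Adj xu cc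
      · exfalso
        have hsub1 := hCsub yu hyuS hyuA hyuC
        have hsub0 := hCsub xu hxuS hxuA hxuC
        rcases fin2_cases (h a0) with hc | hc
        · exact hne0 (hsub0 a0 b0 ha0 hb0 (hc.trans hxu0.symm)
            ((hs0.symm.trans hc).trans hxu0.symm))
        · exact hne0 (hsub1 a0 b0 ha0 hb0 (hc.trans hyu1.symm)
            ((hs0.symm.trans hc).trans hyu1.symm))
      · refine hcand yu xu hyuS hyuA (fun cc hcc q => hxuC ⟨cc, hcc, q⟩) ?_
        intro z hz
        rcases hW1cover z hz with q | q | q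
        · exact Or.inl q
        · exact Or.inr (Or.inr q)
        · exact Or.inr (Or.inl q)
    · exact hcand xu yu hxuS hxuA (fun cc hcc q => hyuC ⟨cc, hcc, q⟩) hW1cover
  · -- Case Q : each side meets C in at most one vertex; the graph is small
    push_neg at hP
    have hQ : ∀ a b, a ∈ C → b ∈ C → h a = h b → a = b := by
      intro a b ha hb he
      by_contra hne
      exact hne (by_contra fun hne2 => hne2 (hP a b ha hb he))
    set FC : Fin 2 → Finset V :=
      fun c => Finset.univ.filter (fun x => (x ∉ S ∧ G.Adj u x ∧ G.Adj v x) ∧ h x = c)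
      with hFC
    have hFC1 : ∀ c, (FC c).card ≤ 1 := by
      intro c
      refine Finset.card_le_one.mpr (fun a ha b hb => ?_)
      simp only [hFC, Finset.mem_filter] at ha hb
      exact hQ a b ha.2.1 hb.2.1 (ha.2.2.trans hb.2.2.symm)
    have hcover : (Finset.univ : Finset V) ⊆
        (((((S ∪ Fu 0 ∪ Fu 1) ∪ Fv 0) ∪ Fv 1) ∪ FC 0) ∪ FC 1) := by
      intro x _
      have hfin2 := fin2_cases (h x)
      by_cases hxS : x ∈ S
      · simp only [Finset.mem_union]; tauto
      · by_cases hux : G.Adj u x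
        · by_cases hvx : G.Adj v x
          · simp only [Finset.mem_union, hFC, Finset.mem_filter, Finset.mem_univ, true_and]
            tauto
          · simp only [Finset.mem_union, hFv, Finset.mem_filter, Finset.mem_univ, true_and]
            tauto
        · simp only [Finset.mem_union, hFu, Finset.mem_filter, Finset.mem_univ, true_and]
          tauto
    have hbound : Fintype.card V ≤ S.card + 6 := by
      have h0 := Finset.card_le_card hcover
      rw [Finset.card_univ] at h0
      have t1 := Finset.card_union_le S (Fu 0)
      have t2 := Finset.card_union_le (S ∪ Fu 0) (Fu 1)
      have t3 := Finset.card_union_le (S ∪ Fu 0 ∪ Fu 1) (Fv 0)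
      have t4 := Finset.card_union_le ((S ∪ Fu 0 ∪ Fu 1) ∪ Fv 0) (Fv 1)
      have t5 := Finset.card_union_le (((S ∪ Fu 0 ∪ Fu 1) ∪ Fv 0) ∪ Fv 1) (FC 0)
      have t6 := Finset.card_union_le ((((S ∪ Fu 0 ∪ Fu 1) ∪ Fv 0) ∪ Fv 1) ∪ FC 0) (FC 1)
      have := hFu1 0; have := hFu1 1; have := hFv1 0; have := hFv1 1
      have := hFC1 0; have := hFC1 1
      omega
    have hsum : (Finset.univ.filter fun x => φ x = 0).card
        + (Finset.univ.filter fun x => φ x = 1).card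
        + (Finset.univ.filter fun x => φ x = 2).card = Fintype.card V := by
      have hfib := Finset.card_eq_sum_card_fiberwise
        (f := fun x => φ x) (s := (Finset.univ : Finset V)) (t := Finset.univ)
        (fun x _ => Finset.mem_univ _)
      rw [Fin.sum_univ_three] at hfib
      rw [Finset.card_univ] at hfib
      beta_reduce at hfib
      omega
    have hex : (Finset.univ.filter fun x => φ x = 0).card ≤ S.card
        ∨ (Finset.univ.filter fun x => φ x = 1).card ≤ S.card
        ∨ (Finset.univ.filter fun x => φ x = 2).card ≤ S.card := by
      omega
    rcases hex with hx | hx | hx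
    · exact le_trans (le_trans (ioct_le_card G _ (class_isOCT G φ 0).1
        (class_isOCT G φ 0).2) hx) (le_of_eq hScard)
    · exact le_trans (le_trans (ioct_le_card G _ (class_isOCT G φ 1).1
        (class_isOCT G φ 1).2) hx) (le_of_eq hScard)
    · exact le_trans (le_trans (ioct_le_card G _ (class_isOCT G φ 2).1
        (class_isOCT G φ 2).2) hx) (le_of_eq hScard)
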